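/- Let R be a commutative strongly ℤ-graded ring with grading 𝒜. For all k, ℓ ∈ ℤ, the 𝒜 0-linear map 𝒜 k ⊗[𝒜 0] 𝒜 ℓ → 𝒜 (k+ℓ) induced by multiplication (r ⊗ s ↦ r·s) is bijective. -/
import Mathlib


open TensorProduct

/-- A ℤ-graded ring is *strongly graded* if `𝒜 i * 𝒜 j = 𝒜 (i + j)` for all `i j`. -/
def IsStronglyGraded {R : Type*} [Ring R] (𝒜 : ℤ → Submodule ℤ R) : Prop :=
  ∀ i j : ℤ, 𝒜 i * 𝒜 j = 𝒜 (i + j)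

variable {R : Type*} [CommRing R] (𝒜 : ℤ → Submodule ℤ R) [GradedRing 𝒜]

/-- The homogeneous component `𝒜 n` is a module over the subring `𝒜 0`,
with the action given by multiplication in `R`. -/
instance gradeLeftModule (n : ℤ) : Module (𝒜 0) (𝒜 n) where
  smul a x := ⟨(a : R) * x, by simpa using SetLike.mul_mem_graded a.2 x.2⟩
  one_smul x := Subtype.ext (one_mul _)
  mul_smul a b x := Subtype.ext (mul_assoc _ _ _)
  smul_zero a := Subtype.ext (mul_zero _)
  smul_add a x y := Subtype.ext (mul_add _ _ _)
  add_smul a b x := Subtype.ext (add_mul _ _ _)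
  zero_smul x := Subtype.ext (zero_mul _)

/-- For a commutative strongly ℤ-graded ring, the `𝒜 0`-linear map
`𝒜 k ⊗[𝒜 0] 𝒜 ℓ → 𝒜 (k+ℓ)` induced by multiplication is bijective. -/
theorem grade_tensor_grade_mul_bijective (h : IsStronglyGraded 𝒜) (k l : ℤ)
    (g : ((𝒜 k) ⊗[𝒜 0] (𝒜 l)) →ₗ[𝒜 0] (𝒜 (k + l)))
    (hg : ∀ (r : 𝒜 k) (s : 𝒜 l), (g (r ⊗ₜ s) : R) = (r : R) * (s : R)) :
    Function.Bijective g := by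
  classical
  -- write 1 as a finite sum of products of elements of `𝒜 k` and `𝒜 (-k)`
  obtain ⟨L, hL⟩ : ∃ L : List ((𝒜 k) × (𝒜 (-k))),
      (L.map fun p => (p.1 : R) * (p.2 : R)).sum = 1 := by
    have h1 : (1 : R) ∈ 𝒜 k * 𝒜 (-k) := by
      rw [h k (-k), add_neg_cancel]
      exact SetLike.GradedOne.one_mem
    refine Submodule.mul_induction_on h1
      (fun m hm n hn => ⟨[(⟨m, hm⟩, ⟨n, hn⟩)], by simp⟩) ?_
    rintro x y ⟨L1, hL1⟩ ⟨L2, hL2⟩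
    exact ⟨L1 ++ L2, by simp [hL1, hL2]⟩
  -- multiplication by an element of `𝒜 (-k)` lands in `𝒜 l`
  have meml : ∀ (b : 𝒜 (-k)) (x : 𝒜 (k + l)), (b : R) * x ∈ 𝒜 l := fun b x => by
    have := SetLike.mul_mem_graded b.2 x.2
    rwa [show -k + (k + l) = l by ring] at this
  -- evaluating a list sum of linear maps
  have eval_sum : ∀ (M : List ((𝒜 (k + l)) →ₗ[𝒜 0] ((𝒜 k) ⊗[𝒜 0] (𝒜 l))))
      (x : 𝒜 (k + l)), M.sum x = (M.map fun f => f x).sum := by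
    intro M x
    induction M with
    | nil => rfl
    | cons f M ih => simp [ih]
  -- a list sum tensored with a fixed element
  have tmul_list_sum : ∀ (f : ((𝒜 k) × (𝒜 (-k))) → (𝒜 k)) (M : List ((𝒜 k) × (𝒜 (-k))))
      (s : 𝒜 l), (M.map fun p => f p ⊗ₜ[𝒜 0] s).sum = (M.map f).sum ⊗ₜ[𝒜 0] s := by
    intro f M s
    induction M with
    | nil => simp [TensorProduct.zero_tmul]
    | cons a M ih => simp [ih, TensorProduct.add_tmul]
  -- coercion of a list sum in a submodule
  have coe_list_sum : ∀ (n : ℤ) (M : List (𝒜 n)),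
      ((M.sum : 𝒜 n) : R) = (M.map fun z => z.1).sum := by
    intro n M
    induction M with
    | nil => rfl
    | cons a M ih => simp [ih]
  -- the building blocks of the candidate inverse map
  let mulB : (𝒜 (-k)) → ((𝒜 (k + l)) →ₗ[𝒜 0] (𝒜 l)) := fun b =>
    { toFun := fun x => ⟨(b : R) * x, meml b x⟩
      map_add' := fun x y => Subtype.ext (by
        show (b : R) * ((x : R) + (y : R)) = (b : R) * x + (b : R) * y
        ring)
      map_smul' := fun c x => Subtype.ext (by
        show (b : R) * ((c : R) * x) = (c : R) * ((b : R) * x)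
        ring) }
  let F : ((𝒜 k) × (𝒜 (-k))) → ((𝒜 (k + l)) →ₗ[𝒜 0] ((𝒜 k) ⊗[𝒜 0] (𝒜 l))) := fun p =>
    (TensorProduct.mk (𝒜 0) (𝒜 k) (𝒜 l) p.1).comp (mulB p.2)
  -- the candidate inverse map
  let φ : (𝒜 (k + l)) →ₗ[𝒜 0] ((𝒜 k) ⊗[𝒜 0] (𝒜 l)) := (L.map F).sum
  have φ_apply : ∀ x : 𝒜 (k + l),
      φ x = (L.map fun p => p.1 ⊗ₜ[𝒜 0] (⟨(p.2 : R) * x, meml p.2 x⟩ : 𝒜 l)).sum := by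
    intro x
    simp only [φ, eval_sum, List.map_map]
    rfl
  -- `g ∘ φ = id`
  have hsec : ∀ x : 𝒜 (k + l), g (φ x) = x := by
    intro x
    apply Subtype.ext
    rw [φ_apply, map_list_sum, coe_list_sum, List.map_map, List.map_map]
    have hcongr : ∀ p ∈ L,
        (((fun z : 𝒜 (k + l) => z.1) ∘ ⇑g) ∘
          fun p => p.1 ⊗ₜ[𝒜 0] (⟨(p.2 : R) * x, meml p.2 x⟩ : 𝒜 l)) p
        = ((p.1 : R) * (p.2 : R)) * (x : R) := by
      intro p _
      simp only [Function.comp_apply]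
      rw [show ((g (p.1 ⊗ₜ[𝒜 0] (⟨(p.2 : R) * x, meml p.2 x⟩ : 𝒜 l)) : 𝒜 (k + l)) : R)
          = (p.1 : R) * ((p.2 : R) * (x : R)) from hg p.1 _]
      ring
    rw [List.map_congr_left hcongr, List.sum_map_mul_right, hL, one_mul]
  -- `φ ∘ g = id`
  have hret : ∀ t : ((𝒜 k) ⊗[𝒜 0] (𝒜 l)), φ (g t) = t := by
    intro t
    induction t using TensorProduct.induction_on with
    | zero => simp
    | add a b ha hb => rw [map_add, map_add, ha, hb]
    | tmul r s =>
      rw [φ_apply]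
      have mem0 : ∀ p : ((𝒜 k) × (𝒜 (-k))), (p.2 : R) * (r : R) ∈ 𝒜 0 := fun p => by
        have := SetLike.mul_mem_graded p.2.2 r.2
        rwa [neg_add_cancel] at this
      -- each summand equals `(⟨b * r⟩ • a) ⊗ₜ s`
      have step : ∀ p : ((𝒜 k) × (𝒜 (-k))),
          p.1 ⊗ₜ[𝒜 0] (⟨(p.2 : R) * (g (r ⊗ₜ[𝒜 0] s) : R), meml p.2 _⟩ : 𝒜 l)
            = ((⟨(p.2 : R) * (r : R), mem0 p⟩ : 𝒜 0) • p.1) ⊗ₜ[𝒜 0] s := by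
        intro p
        rw [smul_tmul]
        congr 1
        apply Subtype.ext
        show (p.2 : R) * (g (r ⊗ₜ[𝒜 0] s) : R) = ((p.2 : R) * (r : R)) * (s : R)
        rw [hg r s]
        ring
      rw [List.map_congr_left fun p (_ : p ∈ L) => step p]
      rw [tmul_list_sum (fun p => ((⟨(p.2 : R) * (r : R), mem0 p⟩ : 𝒜 0) • p.1))]
      congr 1
      apply Subtype.ext
      rw [coe_list_sum, List.map_map]
      have hcongr : ∀ p ∈ L,
          ((fun z : 𝒜 k => z.1) ∘
            fun p => ((⟨(p.2 : R) * (r : R), mem0 p⟩ : 𝒜 0) • p.1)) p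
          = ((p.1 : R) * (p.2 : R)) * (r : R) := by
        intro p _
        show ((p.2 : R) * (r : R)) * (p.1 : R) = ((p.1 : R) * (p.2 : R)) * (r : R)
        ring
      rw [List.map_congr_left hcongr, List.sum_map_mul_right, hL, one_mul]
  exact ⟨fun a b hab => by rw [← hret a, hab, hret b], fun x => ⟨φ x, hsec x⟩⟩
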